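/- Let (X, 𝒳, μ, (T_g)) be a good F₂-system. Then it is F₂²-ergodic: every measurable set E ⊆ X with T_g E = E (up to null sets) for all g ∈ F₂ of even word length satisfies μ(E) = 0 or μ(E) = μ(X). -/

import Mathlib

open MeasureTheory

/-- The generator `a` of `F₂`. -/
def gena : FreeGroup (Fin 2) := FreeGroup.of 0
/-- The generator `b` of `F₂`. -/
def genb : FreeGroup (Fin 2) := FreeGroup.of 1

/-- The data of a *good system*: a decomposition `X = X_a ∪ X_b ∪ X₀` satisfying
the measure, invariance, ergodicity and generation axioms (i)–(iv). -/
structure GoodSystem {X : Type*} [MeasurableSpace X] (μ : Measure X)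
    (T : FreeGroup (Fin 2) → X → X) where
  Xa : Set X
  Xb : Set X
  X0 : Set X
  meas_a : MeasurableSet Xa
  meas_b : MeasurableSet Xb
  meas_0 : MeasurableSet X0
  disj_ab : Disjoint Xa Xb
  disj_a0 : Disjoint Xa X0
  disj_b0 : Disjoint Xb X0
  cover : Xa ∪ Xb ∪ X0 = Set.univ
  /-- (i) `μ(X_a) = μ(X)/4`. -/
  meas_Xa : μ Xa = μ Set.univ / 4
  /-- (i) `μ(X_b) = μ(X)/4`. -/
  meas_Xb : μ Xb = μ Set.univ / 4
  /-- (i) `μ(X₀) = μ(X)/2`. -/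
  meas_X0 : μ X0 = μ Set.univ / 2
  /-- (i) `X_b` supports measurable subsets of every intermediate measure. -/
  subsets : ∀ κ : ENNReal, κ ≤ μ Xb → ∃ S ⊆ Xb, MeasurableSet S ∧ μ S = κ
  /-- (ii) `T_a X_a = X_a`. -/
  inv_a : T gena '' Xa = Xa
  /-- (ii) `T_b X_b = X_b`. -/
  inv_b : T genb '' Xb = Xb
  /-- (ii) `T_a X_b ⊆ T_b X_a ∪ T_b⁻¹ X_a`. -/
  incl1 : T gena '' Xb ⊆ T genb '' Xa ∪ T genb⁻¹ '' Xa
  /-- (ii) `T_b X_a ∪ T_b⁻¹ X_a ⊆ X₀`. -/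
  incl2 : T genb '' Xa ∪ T genb⁻¹ '' Xa ⊆ X0
  /-- (iii) the number of ergodic components of `X_a`. -/
  m : ℕ
  m_pos : 0 < m
  /-- (iii) the components `X_{a,1}, …, X_{a,m}`. -/
  comp : Fin m → Set X
  comp_meas : ∀ i, MeasurableSet (comp i)
  comp_pos : ∀ i, 0 < μ (comp i)
  comp_disj : ∀ i j, i ≠ j → Disjoint (comp i) (comp j)
  comp_cover : (⋃ i, comp i) = Xa
  /-- (iii) each component is `T_a`-invariant. -/
  comp_inv : ∀ i, T gena '' comp i = comp i
  /-- (iii) `T_a²` is ergodic on each component. -/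
  comp_erg : ∀ i, ∀ B ⊆ comp i, MeasurableSet B →
    T (gena ^ 2) '' B = B → μ B = 0 ∨ μ B = μ (comp i)
  /-- (iv) `X = ∪_{g ∈ F₂} T_g X_{a,i}` up to null sets, for each `i`. -/
  generate : ∀ i, μ (Set.univ \ ⋃ g : FreeGroup (Fin 2), T g '' comp i) = 0

/-!
Put `U = T_a⁻¹ E`. Since `a²`, `ab⁻¹` and `ab` have even length, both `T_a` and `T_b` swap `E`
and `U` modulo null sets, so `E ∆ U` is invariant under all of `F₂`. The whole group is ergodic:
`T_a²` is ergodic on a component `X_{a,1}`, and an invariant set containing `X_{a,1}` contains its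
translates, which cover `X`. If `E ∆ U` is null then `E` itself is `F₂`-invariant; if it is
conull then `T_a⁻¹ E = Eᶜ` modulo null sets, which is impossible: on the `T_a`-invariant set
`X_{a,1}` of positive measure, `E` would be `T_a²`-invariant, hence trivial there, while `T_a`
exchanges it with its complement.
-/

open Set Filter Function

structure IsMeasurePreservingAction {Γ X : Type*} [Group Γ] [MeasurableSpace X]
    (T : Γ → X → X) (μ : Measure X) : Prop where
  map_one : T 1 = id
  map_mul : ∀ g h, T (g * h) = T g ∘ T h
  measurePreserving : ∀ g, MeasurePreserving (T g) μ μ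

namespace IsMeasurePreservingAction

variable {Γ X : Type*} [Group Γ] [MeasurableSpace X] {T : Γ → X → X} {μ : Measure X}

theorem preimage_mul (hT : IsMeasurePreservingAction T μ) (g h : Γ) (s : Set X) :
    T (g * h) ⁻¹' s = T h ⁻¹' (T g ⁻¹' s) := by
  rw [hT.map_mul]; rfl

theorem leftInverse_inv (hT : IsMeasurePreservingAction T μ) (g : Γ) :
    LeftInverse (T g⁻¹) (T g) := fun x => by
  rw [← comp_apply (f := T g⁻¹), ← hT.map_mul, inv_mul_cancel, hT.map_one, id]

theorem rightInverse_inv (hT : IsMeasurePreservingAction T μ) (g : Γ) :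
    RightInverse (T g⁻¹) (T g) := fun x => by
  simpa using hT.leftInverse_inv g⁻¹ x

theorem image_eq_preimage_inv (hT : IsMeasurePreservingAction T μ) (g : Γ) (s : Set X) :
    T g '' s = T g⁻¹ ⁻¹' s :=
  congrFun (image_eq_preimage_of_inverse (hT.leftInverse_inv g) (hT.rightInverse_inv g)) s

theorem preimage_ae_eq_of_forall_of {α : Type*} {T : FreeGroup α → X → X}
    (hT : IsMeasurePreservingAction T μ) {s : Set X}
    (hs : ∀ x, T (FreeGroup.of x) ⁻¹' s =ᵐ[μ] s) (g : FreeGroup α) : T g ⁻¹' s =ᵐ[μ] s := by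
  induction g using FreeGroup.induction_on with
  | C1 => rw [hT.map_one, preimage_id]; exact ae_eq_refl s
  | of x => exact hs x
  | inv_of x hx =>
    have := (hT.measurePreserving (FreeGroup.of x)⁻¹).quasiMeasurePreserving.preimage_ae_eq hx
    rw [← hT.preimage_mul, mul_inv_cancel, hT.map_one, preimage_id] at this
    exact this.symm
  | mul g h hg hh =>
    rw [hT.preimage_mul]
    exact ((hT.measurePreserving h).quasiMeasurePreserving.preimage_ae_eq hg).trans hh

theorem ae_eq_univ_of_ae_subset [Countable Γ] (hT : IsMeasurePreservingAction T μ)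
    {s C : Set X} (hs : ∀ g, T g ⁻¹' s =ᵐ[μ] s) (hC : ∀ᵐ x ∂μ, x ∈ C → x ∈ s)
    (hgen : μ (univ \ ⋃ g, T g '' C) = 0) : s =ᵐ[μ] (univ : Set X) := by
  have hcover : ∀ᵐ x ∂μ, x ∈ ⋃ g, T g '' C := by
    rwa [ae_iff, ← compl_eq_univ_sdiff] at *
  have htranslate : ∀ᵐ x ∂μ, ∀ g, x ∈ T g '' C → x ∈ s := by
    refine ae_all_iff.2 fun g => ?_
    filter_upwards [(hT.measurePreserving g⁻¹).quasiMeasurePreserving.ae hC, hs g⁻¹]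
      with x hxC hxs
    rw [hT.image_eq_preimage_inv]
    exact fun hx => hxs.mp (hxC hx)
  rw [eventuallyEq_univ]
  filter_upwards [hcover, htranslate] with x hx hxs
  obtain ⟨g, hg⟩ := mem_iUnion.1 hx
  exact hxs g hg

end IsMeasurePreservingAction

theorem preimage_symmDiff_ae_eq_of_swap {X : Type*} [MeasurableSpace X] {μ : Measure X}
    {f : X → X} {s t : Set X} (hs : f ⁻¹' s =ᵐ[μ] t) (ht : f ⁻¹' t =ᵐ[μ] s) :
    f ⁻¹' symmDiff s t =ᵐ[μ] (symmDiff s t : Set X) := by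
  have := hs.symmDiff ht
  rwa [symmDiff_comm t, ← preimage_symmDiff] at this

theorem ae_eq_compl_self_iff {X : Type*} [MeasurableSpace X] {μ : Measure X} {c : Set X} :
    c =ᵐ[μ] (cᶜ : Set X) ↔ μ = 0 := by
  refine ⟨fun hc => ?_, fun hμ => by rw [hμ, ae_zero]; exact eventually_bot⟩
  rw [← ae_eq_bot, ← eventually_false_iff_eq_bot]
  filter_upwards [hc] with x hx
  exact iff_not_self (Iff.of_eq hx)

theorem ae_eq_compl_of_symmDiff_ae_eq_univ {X : Type*} [MeasurableSpace X] {μ : Measure X}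
    {s t : Set X} (h : symmDiff s t =ᵐ[μ] (univ : Set X)) : t =ᵐ[μ] (sᶜ : Set X) := by
  filter_upwards [h] with x hx
  have hmem : x ∈ symmDiff s t := hx.mpr trivial
  rw [mem_symmDiff] at hmem
  change (x ∈ t) = (x ∉ s)
  rw [eq_iff_iff]
  tauto

theorem MeasureTheory.QuasiErgodic.not_preimage_ae_eq_compl {X : Type*} [MeasurableSpace X]
    {ν : Measure X} [NeZero ν] {f : X → X} (hf2 : QuasiErgodic (f ∘ f) ν)
    (hf : Measure.QuasiMeasurePreserving f ν ν) {s : Set X} (hs : NullMeasurableSet s ν) :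
    ¬ f ⁻¹' s =ᵐ[ν] (sᶜ : Set X) := by
  intro hfs
  have hs2 : (f ∘ f) ⁻¹' s =ᵐ[ν] s := by
    simpa [preimage_comp] using (hf.preimage_ae_eq hfs).trans hfs.compl
  obtain ⟨c, hfc, hsc⟩ : ∃ c : Set X, f ⁻¹' c = c ∧ s =ᵐ[ν] c :=
    (hf2.ae_empty_or_univ₀ hs hs2).elim (fun h => ⟨∅, rfl, h⟩) (fun h => ⟨univ, rfl, h⟩)
  have hc : c =ᵐ[ν] (cᶜ : Set X) := by
    simpa [hfc] using (hf.preimage_ae_eq hsc.symm).trans (hfs.trans hsc.compl)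
  exact NeZero.ne ν (ae_eq_compl_self_iff.1 hc)

namespace GoodSystem

variable {X : Type*} [MeasurableSpace X] {μ : Measure X} {T : FreeGroup (Fin 2) → X → X}

theorem preimage_comp (G : GoodSystem μ T) (hT : IsMeasurePreservingAction T μ) (i : Fin G.m) :
    T gena ⁻¹' G.comp i = G.comp i := by
  nth_rw 1 [← G.comp_inv i]
  exact preimage_image_eq _ (hT.leftInverse_inv gena).injective

theorem measurePreserving_restrict_comp (G : GoodSystem μ T)
    (hT : IsMeasurePreservingAction T μ) (i : Fin G.m) :
    MeasurePreserving (T gena) (μ.restrict (G.comp i)) (μ.restrict (G.comp i)) := by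
  simpa only [G.preimage_comp hT i] using
    (hT.measurePreserving gena).restrict_preimage (G.comp_meas i)

theorem quasiErgodic_comp [IsFiniteMeasure μ] (G : GoodSystem μ T)
    (hT : IsMeasurePreservingAction T μ) (i : Fin G.m) :
    QuasiErgodic (T gena ∘ T gena) (μ.restrict (G.comp i)) where
  toQuasiMeasurePreserving :=
    ((G.measurePreserving_restrict_comp hT i).comp
      (G.measurePreserving_restrict_comp hT i)).quasiMeasurePreserving
  aeconst_set s hs hfs := by
    rw [← hT.map_mul, ← sq] at hfs
    have hB : T (gena ^ 2) '' (s ∩ G.comp i) = s ∩ G.comp i := by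
      have hpre : T (gena ^ 2) ⁻¹' (s ∩ G.comp i) = s ∩ G.comp i := by
        rw [preimage_inter, hfs, sq, hT.preimage_mul, G.preimage_comp hT, G.preimage_comp hT]
      nth_rw 1 [← hpre]
      exact image_preimage_eq _ (hT.rightInverse_inv _).surjective
    rw [eventuallyConst_set']
    rcases G.comp_erg i _ inter_subset_right (hs.inter (G.comp_meas i)) hB with h | h
    · left
      rwa [ae_eq_empty, Measure.restrict_apply hs]
    · right
      rwa [ae_eq_univ_iff_measure_eq hs.nullMeasurableSet, Measure.restrict_apply hs,
        Measure.restrict_apply_univ]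

theorem not_preimage_gena_ae_eq_compl [IsFiniteMeasure μ] (G : GoodSystem μ T)
    (hT : IsMeasurePreservingAction T μ) {s : Set X} (hs : MeasurableSet s) :
    ¬ T gena ⁻¹' s =ᵐ[μ] (sᶜ : Set X) := by
  let i : Fin G.m := ⟨0, G.m_pos⟩
  have : NeZero (μ.restrict (G.comp i)) :=
    ⟨by rw [Ne, Measure.restrict_eq_zero]; exact (G.comp_pos i).ne'⟩
  exact fun h => (G.quasiErgodic_comp hT i).not_preimage_ae_eq_compl
    (G.measurePreserving_restrict_comp hT i).quasiMeasurePreserving hs.nullMeasurableSet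
    (ae_restrict_of_ae h)

theorem ae_eq_empty_or_univ [IsFiniteMeasure μ] (G : GoodSystem μ T)
    (hT : IsMeasurePreservingAction T μ) {s : Set X} (hs : MeasurableSet s)
    (hinv : ∀ g, T g ⁻¹' s =ᵐ[μ] s) : s =ᵐ[μ] (∅ : Set X) ∨ s =ᵐ[μ] (univ : Set X) := by
  let i : Fin G.m := ⟨0, G.m_pos⟩
  have hfull : ∀ t : Set X, (∀ g, T g ⁻¹' t =ᵐ[μ] t) →
      (∀ᵐ x ∂μ.restrict (G.comp i), x ∈ t) → t =ᵐ[μ] (univ : Set X) := fun t ht hCt =>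
    hT.ae_eq_univ_of_ae_subset ht ((ae_restrict_iff' (G.comp_meas i)).1 hCt) (G.generate i)
  have hs2 : (T gena ∘ T gena) ⁻¹' s =ᵐ[μ.restrict (G.comp i)] s := by
    rw [← hT.map_mul]
    exact ae_restrict_of_ae (hinv _)
  rcases (G.quasiErgodic_comp hT i).ae_mem_or_ae_notMem₀ hs.nullMeasurableSet hs2 with h | h
  · exact Or.inr (hfull s hinv h)
  · left
    simpa using (hfull sᶜ (fun g => (hinv g).compl) h).compl

end GoodSystem

theorem goodSystem_F2sq_ergodic_general {X : Type*} [MeasurableSpace X] (μ : Measure X)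
    [IsFiniteMeasure μ]
    (T : FreeGroup (Fin 2) → X → X)
    (hT1 : T 1 = id) (hTmul : ∀ g h : FreeGroup (Fin 2), T (g * h) = T g ∘ T h)
    (hTmp : ∀ g : FreeGroup (Fin 2), MeasurePreserving (T g) μ μ)
    (G : GoodSystem μ T)
    (E : Set X) (hE : MeasurableSet E)
    (hinv : ∀ g : FreeGroup (Fin 2), Even (FreeGroup.norm g) →
      μ (symmDiff (T g ⁻¹' E) E) = 0) :
    μ E = 0 ∨ μ E = μ Set.univ := by
  have hT : IsMeasurePreservingAction T μ := ⟨hT1, hTmul, hTmp⟩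
  have hEven : ∀ g : FreeGroup (Fin 2), Even g.norm → T g ⁻¹' E =ᵐ[μ] E :=
    fun g hg => measure_symmDiff_eq_zero_iff.1 (hinv g hg)
  set U := T gena ⁻¹' E
  have haU : T gena ⁻¹' U =ᵐ[μ] E := by
    rw [← hT.preimage_mul]; exact hEven _ (by decide)
  have hbE : T genb ⁻¹' E =ᵐ[μ] U := by
    have hU : U = T genb ⁻¹' (T (gena * genb⁻¹) ⁻¹' E) := by
      rw [← hT.preimage_mul, inv_mul_cancel_right]
    rw [hU]
    exact ((hT.measurePreserving genb).quasiMeasurePreserving.preimage_ae_eq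
      (hEven _ (by decide))).symm
  have hbU : T genb ⁻¹' U =ᵐ[μ] E := by
    rw [← hT.preimage_mul]; exact hEven _ (by decide)
  have hEU : ∀ g, T g ⁻¹' symmDiff E U =ᵐ[μ] (symmDiff E U : Set X) :=
    hT.preimage_ae_eq_of_forall_of <| Fin.forall_fin_two.2
      ⟨preimage_symmDiff_ae_eq_of_swap EventuallyEq.rfl haU,
        preimage_symmDiff_ae_eq_of_swap hbE hbU⟩
  rcases G.ae_eq_empty_or_univ hT (hE.symmDiff ((hTmp gena).measurable hE)) hEU with h | h
  · have hUE : U =ᵐ[μ] E := (measure_symmDiff_eq_zero_iff.1 (ae_eq_empty.1 h)).symm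
    have hE_inv : ∀ g, T g ⁻¹' E =ᵐ[μ] E :=
      hT.preimage_ae_eq_of_forall_of (Fin.forall_fin_two.2 ⟨hUE, hbE.trans hUE⟩)
    exact (G.ae_eq_empty_or_univ hT hE hE_inv).imp
      (fun h => (measure_congr h).trans measure_empty) measure_congr
  · exact absurd (ae_eq_compl_of_symmDiff_ae_eq_univ h) (G.not_preimage_gena_ae_eq_compl hT hE)

/-- Every good system is `F₂²`-ergodic: any measurable set invariant (up to null sets)
under all `T_g` with `g` of even word length has zero or full measure. -/
theorem goodSystem_F2sq_ergodic {X : Type*} [MeasurableSpace X] (μ : Measure X)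
    [IsFiniteMeasure μ] (hμ : μ ≠ 0)
    (T : FreeGroup (Fin 2) → X → X)
    (hT1 : T 1 = id) (hTmul : ∀ g h : FreeGroup (Fin 2), T (g * h) = T g ∘ T h)
    (hTmp : ∀ g : FreeGroup (Fin 2), MeasurePreserving (T g) μ μ)
    (G : GoodSystem μ T)
    (E : Set X) (hE : MeasurableSet E)
    (hinv : ∀ g : FreeGroup (Fin 2), Even (FreeGroup.norm g) →
      μ (symmDiff (T g ⁻¹' E) E) = 0) :
    μ E = 0 ∨ μ E = μ Set.univ :=
  goodSystem_F2sq_ergodic_general μ T hT1 hTmul hTmp G E hE hinv
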